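/- arXiv:2409.20133 — 2 statements merged into one kernel-verified Lean document; each statement's English description precedes it below -/
import Mathlib

section
/- (Two-part code achievability, core of Theorem 3.) Let n ≥ 1, let X take values in ZMod n, let V be a random variable on a finite alphabet, and let U be a random variable on a finite alphabet 𝒰 jointly distributed with (X,V) such that I(X;U) = 0 and H(V | X, U) = 0. Let W be uniformly distributed on ZMod n and independent of (X, V, U). Then there exists an injective map e : 𝒰 → List Bool whose image is prefix-free such that the response C = (X + W, e(U)) satisfies: (i) I(C; X) = 0 (perfect privacy); (ii) H(V | C, W) = 0 (zero-error decodability of V from the response and the key); and (iii) the expected total length satisfies E[⌈log₂ n⌉ + length(e(U))] ≤ ⌈log₂ n⌉ + H(U) + 1, where H(U) is in bits. -/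
open scoped BigOperators Classical

/-- A probability mass function on a finite sample space. -/
structure FinPMF (Ω : Type) [Fintype Ω] where
  p : Ω → ℝ
  nonneg : ∀ ω, 0 ≤ p ω
  sum_one : ∑ ω, p ω = 1

namespace FinPMF

variable {Ω : Type} [Fintype Ω]

/-- Probability of an event. -/
noncomputable def prob (μ : FinPMF Ω) (E : Ω → Prop) : ℝ :=
  ∑ ω, if E ω then μ.p ω else 0

end FinPMF

section InfoTheory

variable {Ω : Type} [Fintype Ω] {α β γ : Type}

/-- Distribution (pmf) of a random variable `X` under `μ`. -/
noncomputable def dist (μ : FinPMF Ω) (X : Ω → α) (a : α) : ℝ :=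
  μ.prob (fun ω => X ω = a)

/-- Shannon entropy (in bits) of a random variable. -/
noncomputable def entropy (μ : FinPMF Ω) (X : Ω → α) : ℝ :=
  -∑ ω, μ.p ω * Real.logb 2 (dist μ X (X ω))

/-- Conditional Shannon entropy `H(X | Y)`. -/
noncomputable def condEntropy (μ : FinPMF Ω) (X : Ω → α) (Y : Ω → β) : ℝ :=
  entropy μ (fun ω => (X ω, Y ω)) - entropy μ Y

/-- Mutual information `I(X ; Y)`. -/
noncomputable def mutualInfo (μ : FinPMF Ω) (X : Ω → α) (Y : Ω → β) : ℝ :=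
  entropy μ X + entropy μ Y - entropy μ (fun ω => (X ω, Y ω))

/-- Conditional mutual information `I(X ; Y | Z)`. -/
noncomputable def condMutualInfo (μ : FinPMF Ω) (X : Ω → α) (Y : Ω → β) (Z : Ω → γ) : ℝ :=
  entropy μ (fun ω => (X ω, Z ω)) + entropy μ (fun ω => (Y ω, Z ω))
    - entropy μ (fun ω => (X ω, Y ω, Z ω)) - entropy μ Z

/-- Two random variables are independent. -/
def IndepRV (μ : FinPMF Ω) (X : Ω → α) (Y : Ω → β) : Prop :=
  ∀ a b, dist μ (fun ω => (X ω, Y ω)) (a, b) = dist μ X a * dist μ Y b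

/-- A `ZMod n`-valued random variable is uniformly distributed. -/
def UniformOn (μ : FinPMF Ω) {n : ℕ} (W : Ω → ZMod n) : Prop :=
  ∀ a : ZMod n, dist μ W a = 1 / n

end InfoTheory

/-- A set of binary codewords is prefix-free: no codeword is a proper prefix of another
(equivalently, a prefix relation between codewords forces equality). -/
def PrefixFree (S : Set (List Bool)) : Prop :=
  ∀ a ∈ S, ∀ b ∈ S, a <+: b → a = b
section Aux
variable {Ω : Type} [Fintype Ω] {α β γ : Type}

lemma dist_nonneg' (μ : FinPMF Ω) (Y : Ω → α) (a : α) : 0 ≤ dist μ Y a := by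
  unfold _root_.dist FinPMF.prob
  refine Finset.sum_nonneg fun ω _ => ?_
  split
  · exact μ.nonneg ω
  · exact le_refl 0

lemma sum_dist [Fintype α] (μ : FinPMF Ω) (Y : Ω → α) : ∑ a, dist μ Y a = 1 := by
  unfold _root_.dist FinPMF.prob
  rw [Finset.sum_comm]
  rw [← μ.sum_one]
  refine Finset.sum_congr rfl fun ω _ => ?_
  simp

lemma sum_group [Fintype α] (μ : FinPMF Ω) (Y : Ω → α) (f : α → ℝ) :
    ∑ ω, μ.p ω * f (Y ω) = ∑ a, dist μ Y a * f a := by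
  unfold _root_.dist FinPMF.prob
  have step : ∀ a, (∑ ω, if Y ω = a then μ.p ω else 0) * f a
      = ∑ ω, if Y ω = a then μ.p ω * f a else 0 := by
    intro a
    rw [Finset.sum_mul]
    exact Finset.sum_congr rfl fun ω _ => by split <;> simp
  rw [Finset.sum_congr rfl fun a _ => step a, Finset.sum_comm]
  refine Finset.sum_congr rfl fun ω _ => ?_
  rw [Finset.sum_eq_single (Y ω)]
  · simp
  · intro a _ ha; simp [Ne.symm ha]
  · simp

lemma entropy_grouped [Fintype α] (μ : FinPMF Ω) (Y : Ω → α) :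
    entropy μ Y = -∑ a, dist μ Y a * Real.logb 2 (dist μ Y a) := by
  unfold entropy
  rw [sum_group μ Y (fun a => Real.logb 2 (dist μ Y a))]

lemma dist_comp_inj (μ : FinPMF Ω) (Y : Ω → α) (g : α → β) (hg : Function.Injective g) (a : α) :
    dist μ (fun ω => g (Y ω)) (g a) = dist μ Y a := by
  unfold _root_.dist FinPMF.prob
  refine Finset.sum_congr rfl fun ω _ => ?_
  simp [hg.eq_iff]

lemma entropy_comp_inj (μ : FinPMF Ω) (Y : Ω → α) (g : α → β) (hg : Function.Injective g) :
    entropy μ (fun ω => g (Y ω)) = entropy μ Y := by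
  unfold entropy
  congr 1
  refine Finset.sum_congr rfl fun ω _ => ?_
  rw [dist_comp_inj μ Y g hg]

lemma dist_comp [Fintype α] [DecidableEq β] (μ : FinPMF Ω) (Y : Ω → α) (g : α → β) (b : β) :
    dist μ (fun ω => g (Y ω)) b = ∑ a, if g a = b then dist μ Y a else 0 := by
  unfold _root_.dist FinPMF.prob
  have step : ∀ a, (if g a = b then (∑ ω, if Y ω = a then μ.p ω else 0) else 0)
      = ∑ ω, if Y ω = a then (if g a = b then μ.p ω else 0) else 0 := by
    intro a
    split
    · rename_i h; simp [h]
    · rename_i h; simp [h]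
  rw [Finset.sum_congr rfl fun a _ => step a, Finset.sum_comm]
  refine Finset.sum_congr rfl fun ω _ => ?_
  rw [Finset.sum_eq_single (Y ω)]
  · simp
  · intro a _ ha; simp [Ne.symm ha]
  · simp

lemma entropy_pair_of_indep [Fintype α] [Fintype β] (μ : FinPMF Ω) (Y : Ω → α) (Z : Ω → β)
    (h : IndepRV μ Y Z) :
    entropy μ (fun ω => (Y ω, Z ω)) = entropy μ Y + entropy μ Z := by
  rw [entropy_grouped, entropy_grouped, entropy_grouped]
  rw [Fintype.sum_prod_type]
  have key : ∀ a b, dist μ (fun ω => (Y ω, Z ω)) (a, b) *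
      Real.logb 2 (dist μ (fun ω => (Y ω, Z ω)) (a, b)) =
      dist μ Y a * dist μ Z b * Real.logb 2 (dist μ Y a)
      + dist μ Y a * dist μ Z b * Real.logb 2 (dist μ Z b) := by
    intro a b
    rw [h a b]
    rcases eq_or_ne (dist μ Y a) 0 with h1 | h1
    · simp [h1]
    rcases eq_or_ne (dist μ Z b) 0 with h2 | h2
    · simp [h2]
    rw [Real.logb_mul h1 h2]; ring
  calc -∑ a, ∑ b, dist μ (fun ω => (Y ω, Z ω)) (a, b) *
        Real.logb 2 (dist μ (fun ω => (Y ω, Z ω)) (a, b))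
      = -∑ a, ∑ b, (dist μ Y a * dist μ Z b * Real.logb 2 (dist μ Y a)
        + dist μ Y a * dist μ Z b * Real.logb 2 (dist μ Z b)) := by
        congr 1; exact Finset.sum_congr rfl fun a _ => Finset.sum_congr rfl fun b _ => key a b
    _ = -(∑ a, ∑ b, dist μ Y a * dist μ Z b * Real.logb 2 (dist μ Y a))
        + -(∑ a, ∑ b, dist μ Y a * dist μ Z b * Real.logb 2 (dist μ Z b)) := by
        rw [← neg_add]; congr 1; rw [← Finset.sum_add_distrib]
        exact Finset.sum_congr rfl fun a _ => by rw [← Finset.sum_add_distrib]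
    _ = _ := by
        congr 1
        · congr 1
          calc ∑ a, ∑ b, dist μ Y a * dist μ Z b * Real.logb 2 (dist μ Y a)
              = ∑ a, (dist μ Y a * Real.logb 2 (dist μ Y a)) * ∑ b, dist μ Z b := by
                refine Finset.sum_congr rfl fun a _ => ?_
                rw [Finset.mul_sum]; exact Finset.sum_congr rfl fun b _ => by ring
            _ = _ := by rw [sum_dist]; simp
        · congr 1
          rw [Finset.sum_comm]
          calc ∑ b, ∑ a, dist μ Y a * dist μ Z b * Real.logb 2 (dist μ Z b)
              = ∑ b, (dist μ Z b * Real.logb 2 (dist μ Z b)) * ∑ a, dist μ Y a := by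
                refine Finset.sum_congr rfl fun b _ => ?_
                rw [Finset.mul_sum]; exact Finset.sum_congr rfl fun a _ => by ring
            _ = _ := by rw [sum_dist]; simp

lemma entropy_of_uniform (n : ℕ) (hn : 1 ≤ n) (μ : FinPMF Ω) (Y : Ω → ZMod n)
    (h : ∀ a : ZMod n, dist μ Y a = 1 / n) : entropy μ Y = Real.logb 2 n := by
  haveI : NeZero n := ⟨by omega⟩
  rw [entropy_grouped]
  have hn0 : (0:ℝ) < n := by exact_mod_cast hn
  have : ∀ a : ZMod n, dist μ Y a * Real.logb 2 (dist μ Y a) = (n:ℝ)⁻¹ * -Real.logb 2 n := by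
    intro a
    rw [h a, one_div, Real.logb_inv]
  rw [Finset.sum_congr rfl fun a _ => this a, Finset.sum_const, Finset.card_univ]
  have hcard : Fintype.card (ZMod n) = n := ZMod.card n
  rw [hcard, nsmul_eq_mul]
  field_simp
end Aux


section Kraft

/-- `a` written in `len` bits, MSB first. -/
def natToBits (len a : ℕ) : List Bool := (List.range len).map fun i => a.testBit (len - 1 - i)

lemma natToBits_length (len a : ℕ) : (natToBits len a).length = len := by
  simp [natToBits]

lemma natToBits_prefix {m k a b : ℕ} (hmk : m ≤ k) (ha : a < 2^m) (hb : b < 2^k)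
    (h : natToBits m a <+: natToBits k b) : a = b / 2^(k-m) := by
  have hlen : (natToBits m a) = (natToBits k b).take m := by
    rw [List.prefix_iff_eq_take.mp h, natToBits_length]
  have hbit : ∀ j < m, a.testBit j = b.testBit (k - m + j) := by
    intro j hj
    have hidx : m - 1 - (m - 1 - j) = j := by omega
    have h1 : (natToBits m a)[m - 1 - j]? = some (a.testBit j) := by
      rw [natToBits, List.getElem?_map, List.getElem?_range (show m - 1 - j < m by omega)]
      simp [hidx]
    have hidx2 : k - 1 - (m - 1 - j) = k - m + j := by omega
    have h2 : (natToBits k b)[m - 1 - j]? = some (b.testBit (k - m + j)) := by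
      rw [natToBits, List.getElem?_map, List.getElem?_range (show m - 1 - j < k by omega)]
      simp [hidx2]
    have h3 : ((natToBits k b).take m)[m - 1 - j]? = (natToBits k b)[m - 1 - j]? :=
      List.getElem?_take_of_lt (by omega)
    rw [hlen, h3, h2] at h1
    exact (Option.some_inj.mp h1).symm
  apply Nat.eq_of_testBit_eq
  intro j
  rcases lt_or_ge j m with hj | hj
  · rw [hbit j hj, ← Nat.shiftRight_eq_div_pow, Nat.testBit_shiftRight]
  · rw [Nat.testBit_lt_two_pow (lt_of_lt_of_le ha (Nat.pow_le_pow_right (by norm_num) hj)),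
      Nat.testBit_lt_two_pow]
    have hdiv : b / 2^(k-m) < 2^m := by
      apply (Nat.div_lt_iff_lt_mul (by positivity)).mpr
      calc b < 2^k := hb
        _ = 2^m * 2^(k-m) := by rw [← pow_add]; congr 1; omega
    exact lt_of_lt_of_le hdiv (Nat.pow_le_pow_right (by norm_num) hj)

lemma kraft_exists {𝒰 : Type} [Fintype 𝒰] (ℓ : 𝒰 → ℕ)
    (h : ∑ u, ((1:ℝ)/2)^(ℓ u) ≤ 1) :
    ∃ e : 𝒰 → List Bool, Function.Injective e ∧ PrefixFree (Set.range e) ∧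
      ∀ u, (e u).length = ℓ u := by
  classical
  set N := Fintype.card 𝒰 with hN
  let g : 𝒰 ≃ Fin N := Fintype.equivFin 𝒰
  let σ := Tuple.sort (fun i => ℓ (g.symm i))
  let F : Fin N ≃ 𝒰 := σ.trans g.symm
  let L : Fin N → ℕ := fun i => ℓ (F i)
  have hmono : Monotone L := Tuple.monotone_sort (fun i => ℓ (g.symm i))
  let A : Fin N → ℕ := fun i => ∑ j ∈ Finset.univ.filter (fun j => j < i), 2^(L i - L j)
  have hsumF : ∑ i : Fin N, ((1:ℝ)/2)^(L i) ≤ 1 := by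
    rw [show (∑ i : Fin N, ((1:ℝ)/2)^(L i)) = ∑ u, ((1:ℝ)/2)^(ℓ u) from
      Equiv.sum_comp F (fun u => ((1:ℝ)/2)^(ℓ u))]
    exact h
  have pow_half : ∀ {m n : ℕ}, n ≤ m → (2:ℝ)^(m - n) * ((1:ℝ)/2)^m = ((1:ℝ)/2)^n := by
    intro m n hnm
    have h2 : (2:ℝ)^(m - n) * 2^n = 2^m := by
      rw [← pow_add]; congr 1; omega
    have h3 : ((2:ℝ))^m ≠ 0 := by positivity
    field_simp
    simp only [one_div, inv_pow, ← h2, mul_inv]; rw [← mul_assoc, mul_inv_cancel₀ (by positivity), one_mul]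
  have K1 : ∀ i : Fin N, ((A i : ℝ) + 1) * ((1:ℝ)/2)^(L i)
      = ∑ j ∈ Finset.univ.filter (fun j => j ≤ i), ((1:ℝ)/2)^(L j) := by
    intro i
    have hins : Finset.univ.filter (fun j => j ≤ i)
        = insert i (Finset.univ.filter (fun j => j < i)) := by
      ext j; simp [le_iff_lt_or_eq, or_comm]
    rw [hins, Finset.sum_insert (by simp)]
    have hA : (A i : ℝ) = ∑ j ∈ Finset.univ.filter (fun j => j < i), (2:ℝ)^(L i - L j) := by
      simp [A]
    rw [add_mul, one_mul, hA, Finset.sum_mul]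
    rw [Finset.sum_congr rfl (fun j hj => pow_half (hmono (le_of_lt (Finset.mem_filter.mp hj).2)))]
    ring
  have K2 : ∀ i : Fin N, A i + 1 ≤ 2^(L i) := by
    intro i
    have hle : ((A i : ℝ) + 1) * ((1:ℝ)/2)^(L i) ≤ 1 := by
      rw [K1 i]
      refine le_trans (Finset.sum_le_sum_of_subset_of_nonneg (Finset.filter_subset _ _)
        (fun j _ _ => by positivity)) hsumF
    have hpos : (0:ℝ) < ((1:ℝ)/2)^(L i) := by positivity
    have h1 : ((A i : ℝ) + 1) ≤ 1 / (((1:ℝ)/2)^(L i)) := (le_div_iff₀ hpos).mpr hle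
    have h2 : (1:ℝ) / (((1:ℝ)/2)^(L i)) = 2^(L i) := by
      rw [one_div, one_div, inv_pow, inv_inv]
    rw [h2] at h1
    exact_mod_cast h1
  have K4 : ∀ i k : Fin N, i < k → (A i + 1) * 2^(L k - L i) ≤ A k := by
    intro i k hik
    have hLik : L i ≤ L k := hmono (le_of_lt hik)
    have hsub : Finset.univ.filter (fun j => j ≤ i) ⊆ Finset.univ.filter (fun j => j < k) := by
      intro j hj
      simp only [Finset.mem_filter, Finset.mem_univ, true_and] at *
      exact lt_of_le_of_lt hj hik
    have hmain : ∑ j ∈ Finset.univ.filter (fun j => j ≤ i), 2^(L k - L j) ≤ A k :=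
      Finset.sum_le_sum_of_subset hsub
    have hins : Finset.univ.filter (fun j => j ≤ i)
        = insert i (Finset.univ.filter (fun j => j < i)) := by
      ext j; simp [le_iff_lt_or_eq, or_comm]
    rw [hins, Finset.sum_insert (by simp)] at hmain
    have hsplit : ∑ j ∈ Finset.univ.filter (fun j => j < i), 2^(L k - L j)
        = ∑ j ∈ Finset.univ.filter (fun j => j < i), 2^(L k - L i) * 2^(L i - L j) := by
      refine Finset.sum_congr rfl fun j hj => ?_
      have hLj : L j ≤ L i := hmono (le_of_lt (Finset.mem_filter.mp hj).2)
      rw [← pow_add]; congr 1; omega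
    rw [hsplit, ← Finset.mul_sum] at hmain
    calc (A i + 1) * 2^(L k - L i) = 2^(L k - L i) + 2^(L k - L i) * A i := by ring
      _ ≤ A k := hmain
  have K5 : ∀ i k : Fin N, i ≠ k → ¬ (natToBits (L i) (A i) <+: natToBits (L k) (A k)) := by
    intro i k hik hpre
    have hAi : A i < 2^(L i) := by have := K2 i; omega
    have hAk : A k < 2^(L k) := by have := K2 k; omega
    have hlen : L i ≤ L k := by
      have := hpre.length_le
      simpa [natToBits_length] using this
    have heq : A i = A k / 2^(L k - L i) := natToBits_prefix hlen hAi hAk hpre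
    rcases lt_trichotomy i k with hlt | heq2 | hgt
    · have h4 := K4 i k hlt
      have hd : 0 < 2^(L k - L i) := Nat.pow_pos (by norm_num)
      have hstep : A k / 2^(L k - L i) < A i + 1 := by rw [← heq]; omega
      have : A k < (A i + 1) * 2^(L k - L i) := (Nat.div_lt_iff_lt_mul hd).mp hstep
      exact lt_irrefl _ (lt_of_lt_of_le this h4)
    · exact hik heq2
    · have hLki : L k ≤ L i := hmono (le_of_lt hgt)
      have hLL : L i = L k := le_antisymm hlen hLki
      have h4 := K4 k i hgt
      rw [hLL] at h4
      simp at h4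
      rw [hLL, Nat.sub_self, pow_zero, Nat.div_one] at heq
      omega
  refine ⟨fun u => natToBits (L (F.symm u)) (A (F.symm u)), ?_, ?_, ?_⟩
  · intro u u' he
    by_contra hne
    have hidx : F.symm u ≠ F.symm u' := fun hh => hne (by
      have := congrArg F hh; simpa using this)
    refine K5 _ _ hidx ?_
    rw [show natToBits (L (F.symm u)) (A (F.symm u)) = natToBits (L (F.symm u')) (A (F.symm u')) from he]
  · rintro a ⟨u, rfl⟩ b ⟨u', rfl⟩ hpre
    by_cases huu : u = u'
    · rw [huu]
    · have hidx : F.symm u ≠ F.symm u' := fun hh => huu (by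
        have := congrArg F hh; simpa using this)
      exact absurd hpre (K5 _ _ hidx)
  · intro u
    simp [natToBits_length, L]

end Kraft


lemma shannon_lengths {𝒰 : Type} [Fintype 𝒰] (p : 𝒰 → ℝ) (hp : ∀ u, 0 ≤ p u)
    (hs : ∑ u, p u = 1) :
    ∃ ℓ : 𝒰 → ℕ, (∑ u, ((1:ℝ)/2)^(ℓ u) ≤ 1) ∧
      ∑ u, p u * (ℓ u : ℝ) ≤ (-∑ u, p u * Real.logb 2 (p u)) + 1 := by
  classical
  set S : Finset 𝒰 := Finset.univ.filter (fun u => ¬ (p u = 0)) with hSdef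
  set T : Finset 𝒰 := Finset.univ.filter (fun u => p u = 0) with hTdef
  have hsplit : ∀ f : 𝒰 → ℝ, ∑ u ∈ T, f u + ∑ u ∈ S, f u = ∑ u, f u := fun f =>
    Finset.sum_filter_add_sum_filter_not Finset.univ (fun u => p u = 0) f
  have hSp : ∑ u ∈ S, p u = 1 := by
    rw [← hs, ← hsplit p]
    have : ∑ u ∈ T, p u = 0 := Finset.sum_eq_zero fun u hu => (Finset.mem_filter.mp hu).2
    rw [this, zero_add]
  have hple : ∀ u, p u ≤ 1 := fun u => by
    rw [← hs]; exact Finset.single_le_sum (fun i _ => hp i) (Finset.mem_univ u)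
  set ℓ₀ : 𝒰 → ℕ := fun u => ⌈-Real.logb 2 (p u)⌉₊ with hl0
  have hSpos : ∀ u ∈ S, 0 < p u := fun u hu =>
    lt_of_le_of_ne (hp u) (Ne.symm (Finset.mem_filter.mp hu).2)
  have hlognn : ∀ u ∈ S, 0 ≤ -Real.logb 2 (p u) := fun u hu => by
    rw [neg_nonneg]
    exact Real.logb_nonpos (by norm_num) (hp u) (hple u)
  have hpow : ∀ u ∈ S, ((1:ℝ)/2)^(ℓ₀ u) ≤ p u := by
    intro u hu
    have h1 : (-Real.logb 2 (p u)) ≤ (ℓ₀ u : ℝ) := Nat.le_ceil _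
    have h2 : ((1:ℝ)/2)^(ℓ₀ u) = (2:ℝ) ^ (-(ℓ₀ u : ℝ)) := by
      rw [one_div, inv_pow, Real.rpow_neg (by norm_num), Real.rpow_natCast]
    rw [h2]
    conv_rhs => rw [← Real.rpow_logb (show (0:ℝ) < 2 by norm_num) (by norm_num) (hSpos u hu)]
    exact Real.rpow_le_rpow_of_exponent_le (by norm_num) (by linarith)
  have hceil : ∀ u ∈ S, (ℓ₀ u : ℝ) ≤ -Real.logb 2 (p u) + 1 := fun u hu =>
    le_of_lt (Nat.ceil_lt_add_one (hlognn u hu))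
  set K : ℝ := ∑ u ∈ S, ((1:ℝ)/2)^(ℓ₀ u) with hK
  have hK1 : K ≤ 1 := by
    have := Finset.sum_le_sum hpow
    rwa [hSp] at this
  have hHsplit : -∑ u, p u * Real.logb 2 (p u) = -∑ u ∈ S, p u * Real.logb 2 (p u) := by
    rw [← hsplit (fun u => p u * Real.logb 2 (p u))]
    have : ∑ u ∈ T, p u * Real.logb 2 (p u) = 0 :=
      Finset.sum_eq_zero fun u hu => by rw [(Finset.mem_filter.mp hu).2, zero_mul]
    rw [this, zero_add]
  by_cases hcase : K = 1 ∧ T.Nonempty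
  · -- dyadic case with zero-probability symbols
    have hterm : ∀ u ∈ S, ((1:ℝ)/2)^(ℓ₀ u) = p u :=
      (Finset.sum_eq_sum_iff_of_le hpow).mp (by rw [← hK, hSp, hcase.1])
    have hlogeq : ∀ u ∈ S, Real.logb 2 (p u) = -(ℓ₀ u : ℝ) := by
      intro u hu
      rw [← hterm u hu, one_div, inv_pow, Real.logb_inv, Real.logb_pow,
        Real.logb_self_eq_one (by norm_num)]
      ring
    set m : ℕ := T.card + 1 with hm
    refine ⟨fun u => if p u = 0 then m else ℓ₀ u + 1, ?_, ?_⟩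
    · rw [← hsplit (fun u => ((1:ℝ)/2)^(if p u = 0 then m else ℓ₀ u + 1))]
      have hT : ∑ u ∈ T, ((1:ℝ)/2)^(if p u = 0 then m else ℓ₀ u + 1)
          = (T.card : ℝ) * ((1:ℝ)/2)^m := by
        rw [Finset.sum_congr rfl (fun u hu => by rw [if_pos (Finset.mem_filter.mp hu).2])]
        rw [Finset.sum_const, nsmul_eq_mul]
      have hS : ∑ u ∈ S, ((1:ℝ)/2)^(if p u = 0 then m else ℓ₀ u + 1)
          = K / 2 := by
        rw [Finset.sum_congr rfl (fun u hu => by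
          rw [if_neg (Finset.mem_filter.mp hu).2, pow_succ])]
        rw [← Finset.sum_mul, ← hK]
        ring
      rw [hT, hS, hcase.1]
      have hTm : (T.card : ℝ) * ((1:ℝ)/2)^m ≤ 1/2 := by
        rw [hm, pow_succ]
        have h2 : (T.card : ℝ) ≤ 2^(T.card) := by
          exact_mod_cast le_of_lt ((Nat.lt_two_pow_self (n := T.card)))
        have hpos : (0:ℝ) < ((1:ℝ)/2)^(T.card) := by positivity
        have : (T.card : ℝ) * ((1:ℝ)/2)^(T.card) ≤ 1 := by
          calc (T.card : ℝ) * ((1:ℝ)/2)^(T.card) ≤ 2^(T.card) * ((1:ℝ)/2)^(T.card) := by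
                exact mul_le_mul_of_nonneg_right h2 (le_of_lt hpos)
            _ = 1 := by
                rw [one_div, inv_pow, mul_inv_cancel₀ (by positivity)]
        nlinarith
      linarith
    · rw [← hsplit (fun u => p u * ((if p u = 0 then m else ℓ₀ u + 1 : ℕ) : ℝ)), hHsplit]
      have hT : ∑ u ∈ T, p u * ((if p u = 0 then m else ℓ₀ u + 1 : ℕ) : ℝ) = 0 :=
        Finset.sum_eq_zero fun u hu => by rw [(Finset.mem_filter.mp hu).2, zero_mul]
      have hS : ∑ u ∈ S, p u * ((if p u = 0 then m else ℓ₀ u + 1 : ℕ) : ℝ)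
          = (-∑ u ∈ S, p u * Real.logb 2 (p u)) + 1 := by
        rw [← hSp, ← Finset.sum_neg_distrib, ← Finset.sum_add_distrib]
        refine Finset.sum_congr rfl fun u hu => ?_
        rw [if_neg (Finset.mem_filter.mp hu).2, hlogeq u hu]
        push_cast
        ring
      rw [hT, hS, zero_add]
  · -- either no zero-probability symbols, or strict Kraft slack
    have hmex : ∃ m : ℕ, (T.card : ℝ) * ((1:ℝ)/2)^m + K ≤ 1 := by
      rcases T.eq_empty_or_nonempty with hT | hT
      · exact ⟨0, by rw [hT]; simpa using hK1⟩
      · have hKlt : K < 1 := lt_of_le_of_ne hK1 (fun h => hcase ⟨h, hT⟩)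
        have hcpos : (0:ℝ) < T.card := by
          have := Finset.card_pos.mpr hT
          exact_mod_cast this
        obtain ⟨m, hm⟩ := exists_pow_lt_of_lt_one (div_pos (show (0:ℝ) < 1 - K by linarith) hcpos)
          (show ((1:ℝ)/2) < 1 by norm_num)
        refine ⟨m, ?_⟩
        have : (T.card : ℝ) * ((1:ℝ)/2)^m < (T.card : ℝ) * ((1 - K)/T.card) :=
          mul_lt_mul_of_pos_left hm hcpos
        rw [mul_div_cancel₀ _ (ne_of_gt hcpos)] at this
        linarith
    obtain ⟨m, hm⟩ := hmex
    refine ⟨fun u => if p u = 0 then m else ℓ₀ u, ?_, ?_⟩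
    · rw [← hsplit (fun u => ((1:ℝ)/2)^(if p u = 0 then m else ℓ₀ u))]
      have hT : ∑ u ∈ T, ((1:ℝ)/2)^(if p u = 0 then m else ℓ₀ u)
          = (T.card : ℝ) * ((1:ℝ)/2)^m := by
        rw [Finset.sum_congr rfl (fun u hu => by rw [if_pos (Finset.mem_filter.mp hu).2])]
        rw [Finset.sum_const, nsmul_eq_mul]
      have hS : ∑ u ∈ S, ((1:ℝ)/2)^(if p u = 0 then m else ℓ₀ u) = K := by
        rw [hK]
        exact Finset.sum_congr rfl (fun u hu => by rw [if_neg (Finset.mem_filter.mp hu).2])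
      rw [hT, hS]
      exact hm
    · rw [← hsplit (fun u => p u * ((if p u = 0 then m else ℓ₀ u : ℕ) : ℝ)), hHsplit]
      have hT : ∑ u ∈ T, p u * ((if p u = 0 then m else ℓ₀ u : ℕ) : ℝ) = 0 :=
        Finset.sum_eq_zero fun u hu => by rw [(Finset.mem_filter.mp hu).2, zero_mul]
      rw [hT, zero_add]
      have hS : ∑ u ∈ S, p u * ((if p u = 0 then m else ℓ₀ u : ℕ) : ℝ)
          ≤ ∑ u ∈ S, (- (p u * Real.logb 2 (p u)) + p u) := by
        refine Finset.sum_le_sum fun u hu => ?_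
        rw [if_neg (Finset.mem_filter.mp hu).2]
        have := hceil u hu
        have hpu := hSpos u hu
        nlinarith [this, hpu]
      rw [Finset.sum_add_distrib, hSp, Finset.sum_neg_distrib] at hS
      linarith


/-- Two-part code achievability. Given `I(X; U) = 0`, `H(V | X, U) = 0`, and
`W` uniform on `ZMod n` independent of `(X, V, U)`, there is an injective prefix-free binary
code `e` on the alphabet of `U` such that the response `C = (X + W, e(U))` is perfectly
private (`I(C; X) = 0`), zero-error decodable (`H(V | C, W) = 0`), and its expected total
length `E[⌈log₂ n⌉ + |e(U)|]` is at most `⌈log₂ n⌉ + H(U) + 1` bits. -/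
theorem two_part_code_achievability (n : ℕ) (hn : 1 ≤ n)
    {Ω 𝒱 𝒰 : Type} [Fintype Ω] [Fintype 𝒱] [Fintype 𝒰]
    (μ : FinPMF Ω) (X : Ω → ZMod n) (V : Ω → 𝒱) (U : Ω → 𝒰) (W : Ω → ZMod n)
    (hXU : mutualInfo μ X U = 0)
    (hV : condEntropy μ V (fun ω => (X ω, U ω)) = 0)
    (hW_unif : UniformOn μ W)
    (hW_indep : IndepRV μ W (fun ω => (X ω, V ω, U ω))) :
    ∃ e : 𝒰 → List Bool,
      Function.Injective e ∧
      PrefixFree (Set.range e) ∧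
      mutualInfo μ (fun ω => (X ω + W ω, e (U ω))) X = 0 ∧
      condEntropy μ V (fun ω => ((X ω + W ω, e (U ω)), W ω)) = 0 ∧
      ∑ ω, μ.p ω * ((Nat.clog 2 n : ℝ) + ((e (U ω)).length : ℝ)) ≤
        (Nat.clog 2 n : ℝ) + entropy μ U + 1 := by
  classical
  haveI : NeZero n := ⟨by omega⟩
  -- Shannon code lengths for the distribution of U
  obtain ⟨ℓ, hkraft, hE⟩ := shannon_lengths (fun u => dist μ U u)
    (fun u => dist_nonneg' μ U u) (sum_dist μ U)
  obtain ⟨e, einj, epf, elen⟩ := kraft_exists ℓ hkraft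
  -- master distribution facts
  set M : Ω → ZMod n × (ZMod n × 𝒱 × 𝒰) := fun ω => (W ω, (X ω, V ω, U ω)) with hM
  set M2 : Ω → ZMod n × 𝒱 × 𝒰 := fun ω => (X ω, V ω, U ω) with hM2
  have F1 : ∀ t : ZMod n × (ZMod n × 𝒱 × 𝒰), dist μ M t = (1/n) * dist μ M2 t.2 := by
    rintro ⟨w, x, v, u⟩
    have := hW_indep w (x, v, u)
    rw [hM, this, hW_unif w]
  -- dist of (W, (X, U))
  have F2 : ∀ (w x : ZMod n) (u : 𝒰),
      dist μ (fun ω => (W ω, (X ω, U ω))) (w, (x, u)) =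
        (1/n) * dist μ (fun ω => (X ω, U ω)) (x, u) := by
    intro w x u
    have h1 : dist μ (fun ω => (W ω, (X ω, U ω))) (w, (x, u))
        = ∑ t : ZMod n × (ZMod n × 𝒱 × 𝒰), if (t.1, (t.2.1, t.2.2.2)) = (w, (x, u))
            then dist μ M t else 0 :=
      dist_comp μ M (fun t => (t.1, (t.2.1, t.2.2.2))) (w, (x, u))
    have h2 : dist μ (fun ω => (X ω, U ω)) (x, u)
        = ∑ t : ZMod n × 𝒱 × 𝒰, if (t.1, t.2.2) = (x, u) then dist μ M2 t else 0 :=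
      dist_comp μ M2 (fun t => (t.1, t.2.2)) (x, u)
    rw [h1, h2, Finset.mul_sum]
    rw [Finset.sum_congr rfl (fun t _ => by rw [F1 t])]
    simp [Fintype.sum_prod_type, Prod.ext_iff, ite_and, Finset.mul_sum]
  have indep2 : IndepRV μ W (fun ω => (X ω, U ω)) := by
    rintro w ⟨x, u⟩
    rw [F2 w x u, hW_unif w]
  -- dist of (X+W, U, anything) computations
  have F4 : ∀ (s : ZMod n) (u : 𝒰),
      dist μ (fun ω => (X ω + W ω, U ω)) (s, u) = (1/n) * dist μ U u := by
    intro s u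
    have h1 : dist μ (fun ω => (X ω + W ω, U ω)) (s, u)
        = ∑ t : ZMod n × (ZMod n × 𝒱 × 𝒰), if (t.2.1 + t.1, t.2.2.2) = (s, u)
            then dist μ M t else 0 :=
      dist_comp μ M (fun t => (t.2.1 + t.1, t.2.2.2)) (s, u)
    have h2 : dist μ U u = ∑ t : ZMod n × 𝒱 × 𝒰, if t.2.2 = u then dist μ M2 t else 0 :=
      dist_comp μ M2 (fun t => t.2.2) u
    rw [h1, h2, Finset.mul_sum]
    rw [Finset.sum_congr rfl (fun t _ => by rw [F1 t])]
    have hcond : ∀ (x w : ZMod n), (x + w = s) ↔ (w = s - x) := by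
      intro x w
      constructor
      · intro h; rw [← h]; ring
      · intro h; rw [h]; ring
    simp only [Prod.ext_iff, ite_and]
    rw [Fintype.sum_prod_type]
    rw [Finset.sum_comm]
    simp only [hcond]
    simp [Fintype.sum_prod_type, Finset.mul_sum]
  have F5 : UniformOn μ (fun ω => X ω + W ω) := by
    intro s
    have h1 : dist μ (fun ω => X ω + W ω) s
        = ∑ t : ZMod n × (ZMod n × 𝒱 × 𝒰), if t.2.1 + t.1 = s then dist μ M t else 0 :=
      dist_comp μ M (fun t => t.2.1 + t.1) s
    rw [h1, Finset.sum_congr rfl (fun t _ => by rw [F1 t])]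
    have hcond : ∀ (x w : ZMod n), (x + w = s) ↔ (w = s - x) := by
      intro x w
      constructor
      · intro h; rw [← h]; ring
      · intro h; rw [h]; ring
    rw [Fintype.sum_prod_type, Finset.sum_comm]
    simp only [hcond]
    simp only [Finset.sum_ite_eq', Finset.mem_univ, if_pos]
    rw [← Finset.mul_sum, sum_dist μ M2, mul_one]
  have indep1 : IndepRV μ (fun ω => X ω + W ω) U := by
    rintro s u
    rw [F4 s u, F5 s]
  -- entropy values
  have hHW : entropy μ W = Real.logb 2 n := entropy_of_uniform n hn μ W hW_unif
  have hHXW : entropy μ (fun ω => X ω + W ω) = Real.logb 2 n :=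
    entropy_of_uniform n hn μ _ F5
  have hpair1 : entropy μ (fun ω => (X ω + W ω, U ω))
      = Real.logb 2 n + entropy μ U := by
    rw [entropy_pair_of_indep μ _ U indep1, hHXW]
  have hpair2 : entropy μ (fun ω => (W ω, (X ω, U ω)))
      = Real.logb 2 n + entropy μ (fun ω => (X ω, U ω)) := by
    rw [entropy_pair_of_indep μ W _ indep2, hHW]
  have hpair3 : entropy μ (fun ω => (W ω, (X ω, V ω, U ω)))
      = Real.logb 2 n + entropy μ (fun ω => (X ω, V ω, U ω)) := by
    rw [entropy_pair_of_indep μ W _ hW_indep, hHW]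
  -- remove the code e from entropies via injectivity
  have hC : entropy μ (fun ω => (X ω + W ω, e (U ω)))
      = entropy μ (fun ω => (X ω + W ω, U ω)) :=
    entropy_comp_inj μ (fun ω => (X ω + W ω, U ω)) (fun t => (t.1, e t.2)) (by
      rintro ⟨a, b⟩ ⟨c, d⟩ h
      simp only [Prod.mk.injEq] at h
      obtain ⟨h1, h2⟩ := h
      cases h1
      cases einj h2
      rfl)
  have hCX : entropy μ (fun ω => ((X ω + W ω, e (U ω)), X ω))
      = entropy μ (fun ω => (W ω, (X ω, U ω))) :=
    entropy_comp_inj μ (fun ω => (W ω, (X ω, U ω)))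
      (fun t => ((t.2.1 + t.1, e t.2.2), t.2.1)) (by
      rintro ⟨w, x, u⟩ ⟨w', x', u'⟩ h
      simp only [Prod.mk.injEq] at h
      obtain ⟨⟨h1, h2⟩, h3⟩ := h
      cases h3
      cases einj h2
      cases add_left_cancel h1
      rfl)
  have hA : entropy μ (fun ω => ((X ω + W ω, e (U ω)), W ω))
      = entropy μ (fun ω => (W ω, (X ω, U ω))) :=
    entropy_comp_inj μ (fun ω => (W ω, (X ω, U ω)))
      (fun t => ((t.2.1 + t.1, e t.2.2), t.1)) (by
      rintro ⟨w, x, u⟩ ⟨w', x', u'⟩ h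
      simp only [Prod.mk.injEq] at h
      obtain ⟨⟨h1, h2⟩, h3⟩ := h
      cases h3
      cases einj h2
      cases add_right_cancel h1
      rfl)
  have hB : entropy μ (fun ω => (V ω, ((X ω + W ω, e (U ω)), W ω)))
      = entropy μ (fun ω => (W ω, (X ω, V ω, U ω))) :=
    entropy_comp_inj μ (fun ω => (W ω, (X ω, V ω, U ω)))
      (fun t => (t.2.2.1, ((t.2.1 + t.1, e t.2.2.2), t.1))) (by
      rintro ⟨w, x, v, u⟩ ⟨w', x', v', u'⟩ h
      simp only [Prod.mk.injEq] at h
      obtain ⟨hv, ⟨h1, h2⟩, h3⟩ := h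
      cases h3
      cases hv
      cases einj h2
      cases add_right_cancel h1
      rfl)
  have hreorder : entropy μ (fun ω => (V ω, (X ω, U ω)))
      = entropy μ (fun ω => (X ω, V ω, U ω)) :=
    entropy_comp_inj μ (fun ω => (X ω, V ω, U ω)) (fun t => (t.2.1, (t.1, t.2.2))) (by
      rintro ⟨x, v, u⟩ ⟨x', v', u'⟩ h
      simp only [Prod.mk.injEq] at h
      obtain ⟨hv, hx, hu⟩ := h
      cases hv; cases hx; cases hu; rfl)
  refine ⟨e, einj, epf, ?_, ?_, ?_⟩
  · -- perfect privacy
    have hdef : mutualInfo μ (fun ω => (X ω + W ω, e (U ω))) X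
        = entropy μ (fun ω => (X ω + W ω, e (U ω))) + entropy μ X
          - entropy μ (fun ω => ((X ω + W ω, e (U ω)), X ω)) := rfl
    have hXU' : entropy μ X + entropy μ U - entropy μ (fun ω => (X ω, U ω)) = 0 := hXU
    rw [hdef, hC, hCX, hpair1, hpair2]
    linarith
  · -- decodability
    have hdef : condEntropy μ V (fun ω => ((X ω + W ω, e (U ω)), W ω))
        = entropy μ (fun ω => (V ω, ((X ω + W ω, e (U ω)), W ω)))
          - entropy μ (fun ω => ((X ω + W ω, e (U ω)), W ω)) := rfl
    have hV' : entropy μ (fun ω => (V ω, (X ω, U ω)))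
        - entropy μ (fun ω => (X ω, U ω)) = 0 := hV
    rw [hdef, hB, hA, hpair3, hpair2, ← hreorder]
    linarith
  · -- expected length
    have hsum1 : ∑ ω, μ.p ω * ((Nat.clog 2 n : ℝ) + ((e (U ω)).length : ℝ))
        = (Nat.clog 2 n : ℝ) + ∑ ω, μ.p ω * ((ℓ (U ω) : ℝ)) := by
      rw [Finset.sum_congr rfl (fun ω _ => by rw [elen (U ω), mul_add])]
      rw [Finset.sum_add_distrib, ← Finset.sum_mul, μ.sum_one, one_mul]
    have hsum2 : ∑ ω, μ.p ω * ((ℓ (U ω) : ℝ)) = ∑ u, dist μ U u * (ℓ u : ℝ) :=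
      sum_group μ U (fun a => (ℓ a : ℝ))
    have hent : entropy μ U = -∑ u, dist μ U u * Real.logb 2 (dist μ U u) :=
      entropy_grouped μ U
    have hE' : ∑ u, dist μ U u * (ℓ u : ℝ)
        ≤ (-∑ u, dist μ U u * Real.logb 2 (dist μ U u)) + 1 := hE
    rw [hsum1, hsum2, hent]
    linarith
end

section
/- Let X and Y be random variables on finite alphabets with joint distribution P_{XY}. If X is a deterministic function of Y, i.e., H(X | Y) = 0, then g₀(P_{XY}) = h₀(P_{XY}). -/
open scoped BigOperators Classical

section ZeroLeakage

variable {Ω : Type} [Fintype Ω] {𝒳 𝒴 : Type}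

/-- Achievable utilities for `g₀(P_{XY})`: values `I(Y'; U)` over random variables `U` on
finite alphabets, defined on any finite probability space carrying a copy `(X', Y')` of
`(X, Y)`, such that the Markov chain `X − Y − U` holds (`I(X'; U | Y') = 0`) and
`I(U; X') = 0`. -/
def g0Set (μ : FinPMF Ω) (X : Ω → 𝒳) (Y : Ω → 𝒴) : Set ℝ :=
  {r | ∃ (Ω' : Type) (_ : Fintype Ω') (μ' : FinPMF Ω') (𝒰 : Type) (_ : Fintype 𝒰)
        (X' : Ω' → 𝒳) (Y' : Ω' → 𝒴) (U : Ω' → 𝒰),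
        (∀ a, dist μ' (fun ω => (X' ω, Y' ω)) a = dist μ (fun ω => (X ω, Y ω)) a) ∧
        condMutualInfo μ' X' U Y' = 0 ∧
        mutualInfo μ' U X' = 0 ∧
        mutualInfo μ' Y' U = r}

/-- Achievable utilities for `h₀(P_{XY})`: as for `g₀` but without the Markov chain
requirement. -/
def h0Set (μ : FinPMF Ω) (X : Ω → 𝒳) (Y : Ω → 𝒴) : Set ℝ :=
  {r | ∃ (Ω' : Type) (_ : Fintype Ω') (μ' : FinPMF Ω') (𝒰 : Type) (_ : Fintype 𝒰)
        (X' : Ω' → 𝒳) (Y' : Ω' → 𝒴) (U : Ω' → 𝒰),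
        (∀ a, dist μ' (fun ω => (X' ω, Y' ω)) a = dist μ (fun ω => (X ω, Y ω)) a) ∧
        mutualInfo μ' U X' = 0 ∧
        mutualInfo μ' Y' U = r}

/-- `g₀(P_{XY})`: supremum of `I(Y; U)` over `U` with `X − Y − U` and `I(U; X) = 0`. -/
noncomputable def g0 (μ : FinPMF Ω) (X : Ω → 𝒳) (Y : Ω → 𝒴) : ℝ :=
  sSup (g0Set μ X Y)

/-- `h₀(P_{XY})`: supremum of `I(Y; U)` over `U` with `I(U; X) = 0`. -/
noncomputable def h0 (μ : FinPMF Ω) (X : Ω → 𝒳) (Y : Ω → 𝒴) : ℝ :=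
  sSup (h0Set μ X Y)

end ZeroLeakage

section AuxLemmas

variable {Ω : Type} [Fintype Ω] {α β γ : Type}

lemma my_dist_nonneg (μ : FinPMF Ω) (X : Ω → α) (a : α) : 0 ≤ _root_.dist μ X a := by
  unfold _root_.dist FinPMF.prob
  refine Finset.sum_nonneg fun ω _ => ?_
  split
  · exact μ.nonneg ω
  · exact le_rfl

lemma my_p_le_dist (μ : FinPMF Ω) (X : Ω → α) (ω : Ω) : μ.p ω ≤ _root_.dist μ X (X ω) := by
  unfold _root_.dist FinPMF.prob
  have h := Finset.single_le_sum (f := fun ω' => if X ω' = X ω then μ.p ω' else 0)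
    (fun ω' _ => by split; exacts [μ.nonneg ω', le_rfl]) (Finset.mem_univ ω)
  simpa using h

lemma my_dist_pair_le_snd (μ : FinPMF Ω) (X : Ω → α) (Y : Ω → β) (a : α) (b : β) :
    _root_.dist μ (fun ω => (X ω, Y ω)) (a, b) ≤ _root_.dist μ Y b := by
  unfold _root_.dist FinPMF.prob
  refine Finset.sum_le_sum fun ω _ => ?_
  by_cases h : (X ω, Y ω) = (a, b)
  · rw [if_pos h, if_pos (congrArg Prod.snd h)]
  · rw [if_neg h]
    split
    · exact μ.nonneg ω
    · exact le_rfl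

lemma my_dist_pair_add_le (μ : FinPMF Ω) (X : Ω → α) (Y : Ω → β) {a1 a2 : α}
    (hne : a1 ≠ a2) (b : β) :
    _root_.dist μ (fun ω => (X ω, Y ω)) (a1, b) + _root_.dist μ (fun ω => (X ω, Y ω)) (a2, b)
      ≤ _root_.dist μ Y b := by
  unfold _root_.dist FinPMF.prob
  rw [← Finset.sum_add_distrib]
  refine Finset.sum_le_sum fun ω _ => ?_
  by_cases h1 : (X ω, Y ω) = (a1, b)
  · have h2 : (X ω, Y ω) ≠ (a2, b) := by
      intro h2
      injection h1 with hx1 _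
      injection h2 with hx2 _
      exact hne (hx1.symm.trans hx2)
    rw [if_pos h1, if_neg h2, if_pos (congrArg Prod.snd h1), add_zero]
  · rw [if_neg h1, zero_add]
    by_cases h2 : (X ω, Y ω) = (a2, b)
    · rw [if_pos h2, if_pos (congrArg Prod.snd h2)]
    · rw [if_neg h2]
      split
      · exact μ.nonneg ω
      · exact le_rfl

lemma my_entropy_eq_sum [Fintype α] (μ : FinPMF Ω) (X : Ω → α) :
    entropy μ X = -∑ a, _root_.dist μ X a * Real.logb 2 (_root_.dist μ X a) := by
  unfold entropy
  congr 1
  calc ∑ ω, μ.p ω * Real.logb 2 (_root_.dist μ X (X ω))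
      = ∑ ω, ∑ a, (if X ω = a then μ.p ω else 0) * Real.logb 2 (_root_.dist μ X a) := by
        refine Finset.sum_congr rfl fun ω _ => ?_
        rw [Finset.sum_eq_single (X ω)]
        · rw [if_pos rfl]
        · intro b _ hb
          rw [if_neg (fun h => hb h.symm), zero_mul]
        · intro h
          exact absurd (Finset.mem_univ _) h
    _ = ∑ a, _root_.dist μ X a * Real.logb 2 (_root_.dist μ X a) := by
        rw [Finset.sum_comm]
        refine Finset.sum_congr rfl fun a _ => ?_
        rw [← Finset.sum_mul]
        rfl

lemma my_dist_snd_eq [Fintype α] (μ : FinPMF Ω) (X : Ω → α) (Y : Ω → β) (b : β) :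
    _root_.dist μ Y b = ∑ a, _root_.dist μ (fun ω => (X ω, Y ω)) (a, b) := by
  unfold _root_.dist FinPMF.prob
  rw [Finset.sum_comm]
  refine Finset.sum_congr rfl fun ω _ => ?_
  by_cases h : Y ω = b
  · rw [if_pos h, Finset.sum_eq_single (X ω)]
    · exact (if_pos (show (X ω, Y ω) = (X ω, b) by rw [h])).symm
    · intro a _ ha
      refine if_neg (fun hh => ?_)
      have hh' : (X ω, Y ω) = (a, b) := hh
      injection hh' with hx _
      exact ha hx.symm
    · intro h'
      exact absurd (Finset.mem_univ _) h'
  · rw [if_neg h]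
    symm
    refine Finset.sum_eq_zero fun a _ => ?_
    exact if_neg (fun hh => h (congrArg Prod.snd hh))

lemma my_det_pointwise (μ : FinPMF Ω) (X : Ω → α) (Y : Ω → β)
    (h : condEntropy μ X Y = 0) {ω : Ω} (hω : 0 < μ.p ω) :
    _root_.dist μ (fun ω' => (X ω', Y ω')) (X ω, Y ω) = _root_.dist μ Y (Y ω) := by
  set f : Ω → ℝ := fun ω' => μ.p ω' *
    (Real.logb 2 (_root_.dist μ Y (Y ω')) -
      Real.logb 2 (_root_.dist μ (fun ω'' => (X ω'', Y ω'')) (X ω', Y ω'))) with hf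
  have hterm : ∀ ω' ∈ (Finset.univ : Finset Ω), 0 ≤ f ω' := by
    intro ω' _
    rcases eq_or_lt_of_le (μ.nonneg ω') with he | hp
    · simp [hf, ← he]
    · have h1 : μ.p ω' ≤ _root_.dist μ (fun ω'' => (X ω'', Y ω'')) (X ω', Y ω') :=
        my_p_le_dist μ _ ω'
      have h2 : _root_.dist μ (fun ω'' => (X ω'', Y ω'')) (X ω', Y ω') ≤ _root_.dist μ Y (Y ω') :=
        my_dist_pair_le_snd μ X Y _ _
      have hlog : Real.logb 2 (_root_.dist μ (fun ω'' => (X ω'', Y ω'')) (X ω', Y ω'))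
          ≤ Real.logb 2 (_root_.dist μ Y (Y ω')) :=
        Real.logb_le_logb_of_le one_lt_two (lt_of_lt_of_le hp h1) h2
      have := le_of_lt hp
      simp only [hf]
      nlinarith
  have hsum : ∑ ω', f ω' = 0 := by
    rw [← h]
    unfold condEntropy entropy
    simp only [hf, mul_sub]
    rw [Finset.sum_sub_distrib]
    ring
  have hzero : f ω = 0 :=
    (Finset.sum_eq_zero_iff_of_nonneg hterm).mp hsum ω (Finset.mem_univ ω)
  have hlogeq : Real.logb 2 (_root_.dist μ Y (Y ω)) =
      Real.logb 2 (_root_.dist μ (fun ω'' => (X ω'', Y ω'')) (X ω, Y ω)) := by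
    simp only [hf] at hzero
    rcases mul_eq_zero.mp hzero with h' | h'
    · exact absurd h' (ne_of_gt hω)
    · linarith [sub_eq_zero.mp h']
  have h1 : 0 < _root_.dist μ (fun ω'' => (X ω'', Y ω'')) (X ω, Y ω) :=
    lt_of_lt_of_le hω (my_p_le_dist μ _ ω)
  have h2 : _root_.dist μ (fun ω'' => (X ω'', Y ω'')) (X ω, Y ω) ≤ _root_.dist μ Y (Y ω) :=
    my_dist_pair_le_snd μ X Y _ _
  rcases eq_or_lt_of_le h2 with he | hlt
  · exact he
  · exact absurd hlogeq (ne_of_gt (Real.logb_lt_logb one_lt_two h1 hlt))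

lemma my_det_eq (μ : FinPMF Ω) (X : Ω → α) (Y : Ω → β) (h : condEntropy μ X Y = 0)
    {ω ω' : Ω} (hω : 0 < μ.p ω) (hω' : 0 < μ.p ω') (hy : Y ω' = Y ω) : X ω' = X ω := by
  by_contra hne
  have h1 := my_det_pointwise μ X Y h hω
  have h2 := my_det_pointwise μ X Y h hω'
  rw [hy] at h2
  have h3 := my_dist_pair_add_le μ X Y (a1 := X ω) (a2 := X ω')
    (fun hh => hne hh.symm) (Y ω)
  rw [h1, h2] at h3
  have h4 : 0 < _root_.dist μ Y (Y ω) :=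
    lt_of_lt_of_le hω (le_trans (my_p_le_dist μ (fun ω'' => (X ω'', Y ω'')) ω)
      (my_dist_pair_le_snd μ X Y _ _))
  linarith

lemma my_entropy_triple_eq (μ : FinPMF Ω) (X : Ω → α) (U : Ω → γ) (Y : Ω → β)
    (h : condEntropy μ X Y = 0) :
    entropy μ (fun ω => (X ω, U ω, Y ω)) = entropy μ (fun ω => (U ω, Y ω)) := by
  unfold entropy
  congr 1
  refine Finset.sum_congr rfl fun ω _ => ?_
  rcases eq_or_lt_of_le (μ.nonneg ω) with he | hp
  · rw [← he, zero_mul, zero_mul]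
  · have hdist : _root_.dist μ (fun ω' => (X ω', U ω', Y ω')) (X ω, U ω, Y ω)
        = _root_.dist μ (fun ω' => (U ω', Y ω')) (U ω, Y ω) := by
      unfold _root_.dist FinPMF.prob
      refine Finset.sum_congr rfl fun ω' _ => ?_
      rcases eq_or_lt_of_le (μ.nonneg ω') with he' | hp'
      · rw [← he']
        split <;> split <;> rfl
      · by_cases hc : (U ω', Y ω') = (U ω, Y ω)
        · have hyy : Y ω' = Y ω := congrArg Prod.snd hc
          have hxx : X ω' = X ω := my_det_eq μ X Y h hp hp' hyy
          have huu : U ω' = U ω := congrArg Prod.fst hc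
          rw [if_pos (show (X ω', U ω', Y ω') = (X ω, U ω, Y ω) by rw [hxx, huu, hyy]), if_pos hc]
        · rw [if_neg (fun hh => hc (congrArg Prod.snd hh)), if_neg hc]
    rw [hdist]

end AuxLemmas

/-- If `X` is a deterministic function of `Y`, i.e. `H(X | Y) = 0`,
then `g₀(P_{XY}) = h₀(P_{XY})`. -/
theorem g0_eq_h0_of_deterministic {Ω 𝒳 𝒴 : Type} [Fintype Ω] [Fintype 𝒳] [Fintype 𝒴]
    (μ : FinPMF Ω) (X : Ω → 𝒳) (Y : Ω → 𝒴)
    (hdet : condEntropy μ X Y = 0) :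
    g0 μ X Y = h0 μ X Y := by
  have hsets : g0Set μ X Y = h0Set μ X Y := by
    ext r
    constructor
    · rintro ⟨Ω', i', μ', 𝒰, iU, X', Y', U, hd, _, hIX, hIY⟩
      exact ⟨Ω', i', μ', 𝒰, iU, X', Y', U, hd, hIX, hIY⟩
    · rintro ⟨Ω', i', μ', 𝒰, iU, X', Y', U, hd, hIX, hIY⟩
      refine ⟨Ω', i', μ', 𝒰, iU, X', Y', U, hd, ?_, hIX, hIY⟩
      have hce : condEntropy μ' X' Y' = 0 := by
        have hXY : entropy μ' (fun ω => (X' ω, Y' ω)) = entropy μ (fun ω => (X ω, Y ω)) := by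
          rw [my_entropy_eq_sum, my_entropy_eq_sum]
          congr 1
          exact Finset.sum_congr rfl fun a _ => by rw [hd a]
        have hY : entropy μ' Y' = entropy μ Y := by
          have hm : ∀ b, _root_.dist μ' Y' b = _root_.dist μ Y b := by
            intro b
            rw [my_dist_snd_eq μ' X' Y' b, my_dist_snd_eq μ X Y b]
            exact Finset.sum_congr rfl fun a _ => hd (a, b)
          rw [my_entropy_eq_sum, my_entropy_eq_sum]
          congr 1
          exact Finset.sum_congr rfl fun b _ => by rw [hm b]
        unfold condEntropy at hdet ⊢
        rw [hXY, hY]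
        exact hdet
      have htriple := my_entropy_triple_eq μ' X' U Y' hce
      unfold condMutualInfo
      unfold condEntropy at hce
      linarith
  unfold g0 h0
  rw [hsets]
end
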